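/- Let V be a subspace of ℂ^n with a basis whose basis matrix B is in reduced row-echelon form. If V is invariant under the coordinatewise action of Aut(ℂ/L) for a subfield L of ℂ, then every entry of B lies in L. -/

import Mathlib

/-!
A vector in the row space of `B` is determined by its entries in the pivot columns, and there the
rows of `B` have entries `0` and `1`. So for `σ ∈ Aut(ℂ/L)` the vector `σ(B i)`, which lies in `V`,
agrees with `B i` on the pivot columns and hence equals it: every entry of `B` is fixed by
`Aut(ℂ/L)`. It remains that this fixed field is `L`. Automorphisms of a subfield of an
algebraically closed field extend (along a transcendence basis), so it suffices to move `x ∉ L`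
by an automorphism of a subfield over `L`: of the relative algebraic closure of `L` if `x` is
algebraic (sending `x` to another root of its separable minimal polynomial), and of `L(x)` by
`x ↦ x + 1` if `x` is transcendental.
-/

open Polynomial IntermediateField

section Pivots

variable {R ι n : Type*} [Semiring R] [Fintype ι] {b : ι → n → R} {p : ι → n}

theorem eq_sum_apply_pivot_smul_of_mem_span (hp1 : ∀ i, b i (p i) = 1)
    (hp0 : ∀ i i', i' ≠ i → b i' (p i) = 0) {v : n → R}
    (hv : v ∈ Submodule.span R (Set.range b)) : v = ∑ i, v (p i) • b i := by
  obtain ⟨c, rfl⟩ := (Submodule.mem_span_range_iff_exists_fun R).1 hv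
  have hc : ∀ i, (∑ k, c k • b k) (p i) = c i := fun i => by
    rw [Finset.sum_apply, Finset.sum_eq_single i (fun k _ hk => by simp [hp0 i k hk])
      (fun hi => absurd (Finset.mem_univ i) hi)]
    simp [hp1 i]
  simp only [hc]

theorem eq_of_mem_span_of_forall_apply_pivot_eq (hp1 : ∀ i, b i (p i) = 1)
    (hp0 : ∀ i i', i' ≠ i → b i' (p i) = 0) {v w : n → R}
    (hv : v ∈ Submodule.span R (Set.range b)) (hw : w ∈ Submodule.span R (Set.range b))
    (h : ∀ i, v (p i) = w (p i)) : v = w := by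
  rw [eq_sum_apply_pivot_smul_of_mem_span hp1 hp0 hv,
    eq_sum_apply_pivot_smul_of_mem_span hp1 hp0 hw]
  simp only [h]

end Pivots

theorem exists_ringEquiv_extend {K E : Type*} [Field K] [Field E] [Algebra K E] [IsAlgClosed E]
    (e : K ≃+* K) : ∃ σ : E ≃+* E, ∀ a : K, σ (algebraMap K E a) = algebraMap K E (e a) := by
  obtain ⟨s, hs⟩ := exists_isTranscendenceBasis K E
  have := IsAlgClosed.isAlgClosure_of_transcendence_basis _ hs
  let A := Algebra.adjoin K (Set.range ((↑) : s → E))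
  let g : A ≃+* A := (hs.1.aevalEquiv.symm.toRingEquiv.trans (MvPolynomial.mapEquiv _ e)).trans
    hs.1.aevalEquiv.toRingEquiv
  refine ⟨IsAlgClosure.equivOfEquiv E E g, fun a => ?_⟩
  rw [IsScalarTower.algebraMap_apply K A E, IsScalarTower.algebraMap_apply K A E (e a),
    IsAlgClosure.equivOfEquiv_algebraMap]
  congr 1
  simpa [g, ← MvPolynomial.algebraMap_eq, MvPolynomial.mapEquiv_apply] using
    hs.1.aevalEquiv.commutes (e a)

theorem IntermediateField.exists_algEquiv_extend {F E : Type*} [Field F] [Field E] [Algebra F E]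
    [IsAlgClosed E] (K : IntermediateField F E) (e : K ≃ₐ[F] K) :
    ∃ σ : E ≃ₐ[F] E, ∀ a : K, σ a = e a := by
  obtain ⟨σ, hσ⟩ := exists_ringEquiv_extend (E := E) e.toRingEquiv
  refine ⟨AlgEquiv.ofRingEquiv (f := σ) fun r => ?_, hσ⟩
  rw [IsScalarTower.algebraMap_apply F K E]
  simpa using hσ (algebraMap F K r)

theorem exists_algEquiv_apply_ne_of_transcendental {F E : Type*} [Field F] [Field E]
    [Algebra F E] [IsAlgClosed E] {x : E} (hx : Transcendental F x) :
    ∃ σ : E ≃ₐ[F] E, σ x ≠ x := by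
  let e := RatFunc.algEquivOfTranscendental x hx
  let τ : RatFunc F ≃ₐ[F] RatFunc F := IsFractionRing.algEquivOfAlgEquiv (taylorEquiv (1 : F))
  obtain ⟨σ, hσ⟩ := F⟮x⟯.exists_algEquiv_extend (e.symm.trans (τ.trans e))
  refine ⟨σ, fun h => ?_⟩
  have := hσ (AdjoinSimple.gen F x)
  simp [τ, e, ← RatFunc.algebraMap_X, taylorEquiv, taylor_X, h] at this

theorem exists_algEquiv_apply_ne_of_isAlgebraic {F E : Type*} [Field F] [Field E]
    [Algebra F E] [PerfectField F] [IsAlgClosed E] {x : E} (hx : x ∉ (algebraMap F E).range)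
    (halg : IsAlgebraic F x) : ∃ σ : E ≃ₐ[F] E, σ x ≠ x := by
  let M := algebraicClosure F E
  have : IsAlgClosed M := (algebraicClosure.isAlgClosure F E).isAlgClosed
  let x' : M := ⟨x, mem_algebraicClosure_iff.2 halg⟩
  have hx' : x' ∉ (algebraMap F M).range := fun ⟨a, ha⟩ => hx ⟨a, congrArg Subtype.val ha⟩
  have hint : IsIntegral F x' := Algebra.IsIntegral.isIntegral x'
  have hdeg := (minpoly.two_le_natDegree_iff hint).2 hx'
  have hcard : Fintype.card ((minpoly F x').rootSet M) = (minpoly F x').natDegree :=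
    card_rootSet_eq_natDegree (Algebra.IsSeparable.isSeparable F x') (IsAlgClosed.splits _)
  have hx'root : x' ∈ (minpoly F x').rootSet M :=
    mem_rootSet.2 ⟨minpoly.ne_zero hint, minpoly.aeval F x'⟩
  obtain ⟨⟨y, hy⟩, hyx⟩ :=
    Fintype.exists_ne_of_one_lt_card (α := (minpoly F x').rootSet M) (by omega) ⟨x', hx'root⟩
  obtain ⟨σ₀, hσ₀⟩ := minpoly.exists_algEquiv_of_root' (Algebra.IsAlgebraic.isAlgebraic x')
    (mem_rootSet.1 hy).2
  obtain ⟨σ, hσ⟩ := M.exists_algEquiv_extend σ₀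
  refine ⟨σ, fun h => hyx (Subtype.ext (Subtype.ext ?_))⟩
  change (y : E) = x
  rw [← hσ₀, ← hσ x']
  exact h

theorem mem_range_algebraMap_of_forall_algEquiv_apply_eq {F E : Type*} [Field F] [Field E]
    [Algebra F E] [PerfectField F] [IsAlgClosed E] {x : E} (h : ∀ σ : E ≃ₐ[F] E, σ x = x) :
    x ∈ (algebraMap F E).range := by
  by_contra hx
  obtain ⟨σ, hσ⟩ : ∃ σ : E ≃ₐ[F] E, σ x ≠ x := by
    by_cases halg : IsAlgebraic F x
    · exact exists_algEquiv_apply_ne_of_isAlgebraic hx halg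
    · exact exists_algEquiv_apply_ne_of_transcendental halg
  exact hσ (h σ)

theorem stmt_1_general (m n : ℕ) (L : Subfield ℂ) (V : Submodule ℂ (Fin n → ℂ))
    (B : Matrix (Fin m) (Fin n) ℂ) (lead : Fin m → Fin n)
    (hspan : Submodule.span ℂ (Set.range fun i => B i) = V)
    (hlead1 : ∀ i, B i (lead i) = 1)
    (hcol : ∀ i i', i' ≠ i → B i' (lead i) = 0)
    (hinv : ∀ σ : ℂ ≃+* ℂ, (∀ x ∈ L, σ x = x) →
      ∀ v ∈ V, (fun j => σ (v j)) ∈ V) :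
    ∀ i j, B i j ∈ L := by
  intro i j
  subst hspan
  have hrow : B i ∈ Submodule.span ℂ (Set.range fun i => B i) := Submodule.subset_span ⟨i, rfl⟩
  have hfix (σ : ℂ ≃ₐ[L] ℂ) : σ (B i j) = B i j := by
    have hσrow := hinv σ.toRingEquiv (fun x hx => σ.commutes ⟨x, hx⟩) _ hrow
    refine congrFun (eq_of_mem_span_of_forall_apply_pivot_eq hlead1 hcol hσrow hrow fun k => ?_) j
    rcases eq_or_ne k i with rfl | hki
    · simp [hlead1]
    · simp [hcol k i hki.symm]
  obtain ⟨a, ha⟩ := mem_range_algebraMap_of_forall_algEquiv_apply_eq hfix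
  exact ha ▸ a.2

/-- If the rows of a matrix `B` in reduced row-echelon form are a basis of a
subspace `V ⊆ ℂ^n` that is invariant under the coordinatewise action of `Aut(ℂ/L)`, then
every entry of `B` lies in `L`. -/
theorem stmt_1 (m n : ℕ) (L : Subfield ℂ) (V : Submodule ℂ (Fin n → ℂ))
    (B : Matrix (Fin m) (Fin n) ℂ) (lead : Fin m → Fin n)
    (hspan : Submodule.span ℂ (Set.range fun i => B i) = V)
    (hli : LinearIndependent ℂ (fun i => B i))
    (hlead1 : ∀ i, B i (lead i) = 1)
    (hleadleft : ∀ i j, j < lead i → B i j = 0)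
    (hmono : StrictMono lead)
    (hcol : ∀ i i', i' ≠ i → B i' (lead i) = 0)
    (hinv : ∀ σ : ℂ ≃+* ℂ, (∀ x ∈ L, σ x = x) →
      ∀ v ∈ V, (fun j => σ (v j)) ∈ V) :
    ∀ i j, B i j ∈ L :=
  stmt_1_general m n L V B lead hspan hlead1 hcol hinv
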